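/- Let p*, p_g : ℝⁿ → ℝ be measurable functions with p*(x) > 0 and p_g(x) > 0 for all x, and let D, D* : ℝⁿ → ℝ be measurable with D*(x) = ln(p*(x)/p_g(x)). Assume the functions x ↦ p*(x)·ln(1+e^{−D(x)}) + p_g(x)·ln(1+e^{D(x)}) and x ↦ p*(x)·ln(1+e^{−D*(x)}) + p_g(x)·ln(1+e^{D*(x)}) are Lebesgue integrable. Then ∫ [p*(x)·ln(1+e^{−D(x)}) + p_g(x)·ln(1+e^{D(x)})] dx ≥ ∫ [p*(x)·ln(1+e^{−D*(x)}) + p_g(x)·ln(1+e^{D*(x)})] dx. -/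
import Mathlib


open MeasureTheory

lemma cfg_pointwise (a b d : ℝ) (ha : 0 < a) (hb : 0 < b) :
    a * Real.log (1 + b / a) + b * Real.log (1 + a / b) ≤
      a * Real.log (1 + Real.exp (-d)) + b * Real.log (1 + Real.exp d) := by
  set e := Real.exp d with hedef
  have he : 0 < e := Real.exp_pos d
  have hne : Real.exp (-d) = e⁻¹ := by rw [Real.exp_neg]
  rw [hne]
  have hu1 : 0 < 1 + e⁻¹ := by positivity
  have hu2 : 0 < 1 + e := by positivity
  have hv1 : 0 < 1 + b / a := by positivity
  have hv2 : 0 < 1 + a / b := by positivity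
  have h1 : Real.log ((1 + b / a) / (1 + e⁻¹)) ≤ (1 + b / a) / (1 + e⁻¹) - 1 :=
    Real.log_le_sub_one_of_pos (by positivity)
  have h2 : Real.log ((1 + a / b) / (1 + e)) ≤ (1 + a / b) / (1 + e) - 1 :=
    Real.log_le_sub_one_of_pos (by positivity)
  have hl1 : Real.log (1 + b / a) =
      Real.log (1 + e⁻¹) + Real.log ((1 + b / a) / (1 + e⁻¹)) := by
    rw [Real.log_div hv1.ne' hu1.ne']; ring
  have hl2 : Real.log (1 + a / b) =
      Real.log (1 + e) + Real.log ((1 + a / b) / (1 + e)) := by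
    rw [Real.log_div hv2.ne' hu2.ne']; ring
  have hzero : a * ((1 + b / a) / (1 + e⁻¹) - 1) + b * ((1 + a / b) / (1 + e) - 1) = 0 := by
    field_simp
    ring
  nlinarith [mul_le_mul_of_nonneg_left h1 ha.le, mul_le_mul_of_nonneg_left h2 hb.le]

/-- The analytic solution `D*(x) = ln(p*(x)/p_g(x))` minimizes the CFG discriminator
objective among all measurable discriminators with integrable objective. -/
theorem cfg_discriminator_objective_minimized
    (n : ℕ) (pstar pg D Dstar : EuclideanSpace ℝ (Fin n) → ℝ)
    (hpstar_meas : Measurable pstar) (hpg_meas : Measurable pg)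
    (hD_meas : Measurable D) (hDstar_meas : Measurable Dstar)
    (hpstar_pos : ∀ x, 0 < pstar x) (hpg_pos : ∀ x, 0 < pg x)
    (hDstar : ∀ x, Dstar x = Real.log (pstar x / pg x))
    (hintD : Integrable
      (fun x => pstar x * Real.log (1 + Real.exp (-(D x)))
        + pg x * Real.log (1 + Real.exp (D x))))
    (hintDstar : Integrable
      (fun x => pstar x * Real.log (1 + Real.exp (-(Dstar x)))
        + pg x * Real.log (1 + Real.exp (Dstar x)))) :
    ∫ x, (pstar x * Real.log (1 + Real.exp (-(D x)))
        + pg x * Real.log (1 + Real.exp (D x))) ≥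
      ∫ x, (pstar x * Real.log (1 + Real.exp (-(Dstar x)))
        + pg x * Real.log (1 + Real.exp (Dstar x))) := by
  refine integral_mono hintDstar hintD (fun x => ?_)
  have ha := hpstar_pos x
  have hb := hpg_pos x
  have hexp : Real.exp (Dstar x) = pstar x / pg x := by
    rw [hDstar x, Real.exp_log (div_pos ha hb)]
  have hexpneg : Real.exp (-(Dstar x)) = pg x / pstar x := by
    rw [Real.exp_neg, hexp, inv_div]
  simp only [hexp, hexpneg]
  exact cfg_pointwise (pstar x) (pg x) (D x) ha hb
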